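/- arXiv:1008.2108 — 4 statements merged into one kernel-verified Lean document; each statement's English description precedes it below -/
import Mathlib

section
/- Let A be an action set with partition {A^r, A^l, A^bi}. For all closed BCCSP processes p, q over A: p ≲_CC q if and only if the inequation p ≤ q is derivable from the axioms B1–B4 (each used as two inequations) together with the axiom schemas (S^r_p): x ≤ x + a.y for each a ∈ A^r, and (S^l_p): x + a.y ≤ x for each a ∈ A^l. -/
inductive Proc (A : Type) : Type
  | nil : Proc A
  | pre : A → Proc A → Proc A
  | add : Proc A → Proc A → Proc A

inductive Step {A : Type} : Proc A → A → Proc A → Prop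
  | pre (a : A) (p : Proc A) : Step (.pre a p) a p
  | addL {p : Proc A} {a : A} {p' : Proc A} (q : Proc A) :
      Step p a p' → Step (.add p q) a p'
  | addR {q : Proc A} {a : A} {q' : Proc A} (p : Proc A) :
      Step q a q' → Step (.add p q) a q'

/-- `initials p` is the set `I(p)` of actions that `p` can immediately perform. -/
def initials {A : Type} (p : Proc A) : Set A := {a | ∃ p', Step p a p'}

/-- `{Ar, Al, Abi}` is a partition of the action set `A` (cells may be empty). -/
def IsPartition {A : Type} (Ar Al Abi : Set A) : Prop :=
  (Ar ∪ Al ∪ Abi = Set.univ) ∧ Disjoint Ar Al ∧ Disjoint Ar Abi ∧ Disjoint Al Abi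

/-- Covariant-contravariant simulation w.r.t. covariant actions `Ar`,
contravariant actions `Al` and bivariant actions `Abi`. -/
def IsCCSim {A : Type} (Ar Al Abi : Set A) (S : Proc A → Proc A → Prop) : Prop :=
  ∀ p q, S p q →
    (∀ a ∈ Ar ∪ Abi, ∀ p', Step p a p' → ∃ q', Step q a q' ∧ S p' q') ∧
    (∀ a ∈ Al ∪ Abi, ∀ q', Step q a q' → ∃ p', Step p a p' ∧ S p' q')

/-- The covariant-contravariant simulation preorder `p ≲_CC q`. -/
def ccLe {A : Type} (Ar Al Abi : Set A) (p q : Proc A) : Prop :=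
  ∃ S, IsCCSim Ar Al Abi S ∧ S p q

/-- Covariant-contravariant simulation equivalence `p ≡_CC q`. -/
def ccEq {A : Type} (Ar Al Abi : Set A) (p q : Proc A) : Prop :=
  ccLe Ar Al Abi p q ∧ ccLe Ar Al Abi q p

/-- Conformance simulation. -/
def IsConfSim {A : Type} (R : Proc A → Proc A → Prop) : Prop :=
  ∀ p q, R p q →
    initials p ⊆ initials q ∧
    (∀ a q', Step q a q' → a ∈ initials p → ∃ p', Step p a p' ∧ R p' q')

/-- The conformance simulation preorder `p ≲_CS q`. -/
def csLe {A : Type} (p q : Proc A) : Prop := ∃ R, IsConfSim R ∧ R p q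

/-- Conformance simulation equivalence `p ≡_CS q`. -/
def csEq {A : Type} (p q : Proc A) : Prop := csLe p q ∧ csLe q p

/-- The conformance precongruence `p ⊑_CS q`. -/
def csPre {A : Type} (p q : Proc A) : Prop := csLe p q ∧ initials q ⊆ initials p

/-- Plain simulation. -/
def IsSim {A : Type} (S : Proc A → Proc A → Prop) : Prop :=
  ∀ p q, S p q → ∀ a p', Step p a p' → ∃ q', Step q a q' ∧ S p' q'

/-- The plain simulation preorder `p ≲_S q`. -/
def simLe {A : Type} (p q : Proc A) : Prop := ∃ S, IsSim S ∧ S p q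

/-- Ready simulation. -/
def IsRSim {A : Type} (S : Proc A → Proc A → Prop) : Prop :=
  ∀ p q, S p q → initials p = initials q ∧
    (∀ a p', Step p a p' → ∃ q', Step q a q' ∧ S p' q')

/-- The ready simulation preorder `p ≲_RS q`. -/
def rsLe {A : Type} (p q : Proc A) : Prop := ∃ S, IsRSim S ∧ S p q

/-- Ready conformance simulation: a conformance simulation that additionally
guarantees `I(q) ⊆ I(p)` for all related pairs. -/
def IsRCSim {A : Type} (R : Proc A → Proc A → Prop) : Prop :=
  IsConfSim R ∧ ∀ p q, R p q → initials q ⊆ initials p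

/-- The ready conformance simulation preorder `p ≲_RCS q`. -/
def rcsLe {A : Type} (p q : Proc A) : Prop := ∃ R, IsRCSim R ∧ R p q

/-- Open BCCSP terms (with variables indexed by `ℕ`). -/
inductive Term (A : Type) : Type
  | var : ℕ → Term A
  | nil : Term A
  | pre : A → Term A → Term A
  | add : Term A → Term A → Term A

/-- Closed substitution applied to an open term. -/
def Term.subst {A : Type} (σ : ℕ → Proc A) : Term A → Proc A
  | .var n => σ n
  | .nil => .nil
  | .pre a t => .pre a (t.subst σ)
  | .add s t => .add (s.subst σ) (t.subst σ)

/-- View a closed process as an (open) term. -/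
def Proc.toTerm {A : Type} : Proc A → Term A
  | .nil => .nil
  | .pre a p => .pre a p.toTerm
  | .add p q => .add p.toTerm q.toTerm

/-- Inequational derivability (between closed processes) from a set `E` of
inequations between open terms: the least relation containing all substitution
instances of `E` and closed under reflexivity, transitivity and the congruence
rules for prefixing and `+`. -/
inductive DerivLe {A : Type} (E : Set (Term A × Term A)) : Proc A → Proc A → Prop
  | ax (l r : Term A) (σ : ℕ → Proc A) : (l, r) ∈ E → DerivLe E (l.subst σ) (r.subst σ)
  | refl (p : Proc A) : DerivLe E p p
  | trans {p q r : Proc A} : DerivLe E p q → DerivLe E q r → DerivLe E p r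
  | pre (a : A) {p q : Proc A} : DerivLe E p q → DerivLe E (.pre a p) (.pre a q)
  | add {p q r s : Proc A} : DerivLe E p q → DerivLe E r s → DerivLe E (.add p r) (.add q s)

/-- Equational derivability (between closed processes) from a set `E` of
equations between open terms. -/
inductive DerivEq {A : Type} (E : Set (Term A × Term A)) : Proc A → Proc A → Prop
  | ax (l r : Term A) (σ : ℕ → Proc A) : (l, r) ∈ E → DerivEq E (l.subst σ) (r.subst σ)
  | refl (p : Proc A) : DerivEq E p p
  | symm {p q : Proc A} : DerivEq E p q → DerivEq E q p
  | trans {p q r : Proc A} : DerivEq E p q → DerivEq E q r → DerivEq E p r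
  | pre (a : A) {p q : Proc A} : DerivEq E p q → DerivEq E (.pre a p) (.pre a q)
  | add {p q r s : Proc A} : DerivEq E p q → DerivEq E r s → DerivEq E (.add p r) (.add q s)

/-- Substitution of (possibly open) terms for variables. -/
def Term.substT {A : Type} (σ : ℕ → Term A) : Term A → Term A
  | .var n => σ n
  | .nil => .nil
  | .pre a t => .pre a (t.substT σ)
  | .add s t => .add (s.substT σ) (t.substT σ)

/-- Equational derivability between open terms from a set `E` of equations. -/
inductive TDerivEq {A : Type} (E : Set (Term A × Term A)) : Term A → Term A → Prop
  | ax (l r : Term A) (σ : ℕ → Term A) : (l, r) ∈ E → TDerivEq E (l.substT σ) (r.substT σ)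
  | refl (t : Term A) : TDerivEq E t t
  | symm {s t : Term A} : TDerivEq E s t → TDerivEq E t s
  | trans {s t u : Term A} : TDerivEq E s t → TDerivEq E t u → TDerivEq E s u
  | pre (a : A) {s t : Term A} : TDerivEq E s t → TDerivEq E (.pre a s) (.pre a t)
  | add {s t u v : Term A} : TDerivEq E s t → TDerivEq E u v → TDerivEq E (.add s u) (.add t v)

/-- The bisimulation axioms B1–B4, as equations. -/
def BEqns (A : Type) : Set (Term A × Term A) :=
  { (.add (.var 0) (.var 1), .add (.var 1) (.var 0)),
    (.add (.add (.var 0) (.var 1)) (.var 2), .add (.var 0) (.add (.var 1) (.var 2))),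
    (.add (.var 0) (.var 0), .var 0),
    (.add (.var 0) .nil, .var 0) }

/-- The bisimulation axioms B1–B4, each used as two inequations. -/
def BIneqs (A : Type) : Set (Term A × Term A) := BEqns A ∪ Prod.swap '' BEqns A

/-- The axiomatization of the covariant-contravariant simulation preorder:
B1–B4 (as inequations) together with `(S^r_p): x ≤ x + a.y` for `a ∈ Ar`
and `(S^l_p): x + a.y ≤ x` for `a ∈ Al`. -/
def AxCCPre {A : Type} (Ar Al : Set A) : Set (Term A × Term A) :=
  BIneqs A ∪
  { e | ∃ a ∈ Ar, e = (.var 0, .add (.var 0) (.pre a (.var 1))) } ∪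
  { e | ∃ a ∈ Al, e = (.add (.var 0) (.pre a (.var 1)), .var 0) }

/-!
Soundness: `≲_CC` is a precongruence, each instance of B1–B4 relates processes with the same
transitions, and the partition makes `a.y` invisible to the transfer condition that could refute
`x ≲_CC x + a.y` for covariant `a` (dually `x + a.y ≲_CC x` for contravariant `a`).

Completeness, by induction on `p` for `p ≲_CC q`: every summand `b.q'` of `q` can be added to `p`,
by `S^r_p` if `b` is covariant and otherwise by first absorbing the matching summand `b.p'` of `p`
into `p` and rewriting `p'` to `q'`; hence `p ≤ q + p`. Dually every summand of `p` can be
removed from `q + p`, so `p ≤ q + p ≤ q`.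
-/

namespace Proc

variable {A : Type}

lemma step_pre_iff {a b : A} {p p' : Proc A} : Step (.pre b p) a p' ↔ a = b ∧ p' = p := by
  constructor
  · rintro ⟨⟩; exact ⟨rfl, rfl⟩
  · rintro ⟨rfl, rfl⟩; exact .pre _ _

lemma step_add_iff {a : A} {p q r : Proc A} : Step (.add p q) a r ↔ Step p a r ∨ Step q a r := by
  constructor
  · rintro (_ | ⟨_, h⟩ | ⟨_, h⟩)
    exacts [.inl h, .inr h]
  · rintro (h | h)
    exacts [.addL q h, .addR p h]

lemma sizeOf_lt_of_step {a : A} {p p' : Proc A} (h : Step p a p') : sizeOf p' < sizeOf p := by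
  induction h with
  | pre => simp
  | addL _ _ ih | addR _ _ ih => simp only [add.sizeOf_spec]; omega

end Proc

open Proc

section Simulation

variable {A : Type} {Ar Al Abi : Set A}

lemma isCCSim_ccLe : IsCCSim Ar Al Abi (ccLe Ar Al Abi) := by
  rintro p q ⟨S, hS, hpq⟩
  refine ⟨fun a ha p' hp => ?_, fun a ha q' hq => ?_⟩
  · obtain ⟨q', hq, h⟩ := (hS p q hpq).1 a ha p' hp
    exact ⟨q', hq, S, hS, h⟩
  · obtain ⟨p', hp, h⟩ := (hS p q hpq).2 a ha q' hq
    exact ⟨p', hp, S, hS, h⟩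

lemma ccLe_iff {p q : Proc A} :
    ccLe Ar Al Abi p q ↔
      (∀ a ∈ Ar ∪ Abi, ∀ p', Step p a p' → ∃ q', Step q a q' ∧ ccLe Ar Al Abi p' q') ∧
      (∀ a ∈ Al ∪ Abi, ∀ q', Step q a q' → ∃ p', Step p a p' ∧ ccLe Ar Al Abi p' q') := by
  refine ⟨isCCSim_ccLe p q, fun h => ⟨fun u v => ccLe Ar Al Abi u v ∨ (u = p ∧ v = q), ?_,
    .inr ⟨rfl, rfl⟩⟩⟩
  intro u v huv
  obtain ⟨hfwd, hbwd⟩ := huv.elim (isCCSim_ccLe u v) (by rintro ⟨rfl, rfl⟩; exact h)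
  refine ⟨fun a ha u' hu => ?_, fun a ha v' hv => ?_⟩
  · obtain ⟨v', hv, h⟩ := hfwd a ha u' hu
    exact ⟨v', hv, .inl h⟩
  · obtain ⟨u', hu, h⟩ := hbwd a ha v' hv
    exact ⟨u', hu, .inl h⟩

lemma ccLe_refl (p : Proc A) : ccLe Ar Al Abi p p :=
  ⟨Eq, by rintro u _ rfl; exact ⟨fun a _ u' h => ⟨u', h, rfl⟩, fun a _ u' h => ⟨u', h, rfl⟩⟩, rfl⟩

lemma ccLe_trans {p q r : Proc A} (hpq : ccLe Ar Al Abi p q) (hqr : ccLe Ar Al Abi q r) :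
    ccLe Ar Al Abi p r := by
  obtain ⟨S, hS, hpq⟩ := hpq
  obtain ⟨T, hT, hqr⟩ := hqr
  refine ⟨Relation.Comp S T, ?_, q, hpq, hqr⟩
  rintro u w ⟨v, huv, hvw⟩
  refine ⟨fun a ha u' hu => ?_, fun a ha w' hw => ?_⟩
  · obtain ⟨v', hv, huv'⟩ := (hS u v huv).1 a ha u' hu
    obtain ⟨w', hw, hvw'⟩ := (hT v w hvw).1 a ha v' hv
    exact ⟨w', hw, v', huv', hvw'⟩
  · obtain ⟨v', hv, hvw'⟩ := (hT v w hvw).2 a ha w' hw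
    obtain ⟨u', hu, huv'⟩ := (hS u v huv).2 a ha v' hv
    exact ⟨u', hu, v', huv', hvw'⟩

lemma ccLe_pre (a : A) {p q : Proc A} (h : ccLe Ar Al Abi p q) :
    ccLe Ar Al Abi (.pre a p) (.pre a q) := by
  refine ccLe_iff.2 ⟨fun b _ p' hp => ?_, fun b _ q' hq => ?_⟩
  · obtain ⟨rfl, rfl⟩ := step_pre_iff.1 hp
    exact ⟨q, .pre b q, h⟩
  · obtain ⟨rfl, rfl⟩ := step_pre_iff.1 hq
    exact ⟨p, .pre b p, h⟩

lemma ccLe_add {p q r s : Proc A} (hpq : ccLe Ar Al Abi p q) (hrs : ccLe Ar Al Abi r s) :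
    ccLe Ar Al Abi (.add p r) (.add q s) := by
  obtain ⟨hpq₁, hpq₂⟩ := ccLe_iff.1 hpq
  obtain ⟨hrs₁, hrs₂⟩ := ccLe_iff.1 hrs
  refine ccLe_iff.2 ⟨fun a ha u hu => ?_, fun a ha v hv => ?_⟩
  · rcases step_add_iff.1 hu with hu | hu
    · obtain ⟨v, hv, h⟩ := hpq₁ a ha u hu
      exact ⟨v, .addL s hv, h⟩
    · obtain ⟨v, hv, h⟩ := hrs₁ a ha u hu
      exact ⟨v, .addR q hv, h⟩
  · rcases step_add_iff.1 hv with hv | hv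
    · obtain ⟨u, hu, h⟩ := hpq₂ a ha v hv
      exact ⟨u, .addL r hu, h⟩
    · obtain ⟨u, hu, h⟩ := hrs₂ a ha v hv
      exact ⟨u, .addR p hu, h⟩

lemma ccLe_of_step_iff {p q : Proc A} (h : ∀ a r, Step p a r ↔ Step q a r) :
    ccLe Ar Al Abi p q :=
  ccLe_iff.2 ⟨fun a _ p' hp => ⟨p', (h a p').1 hp, ccLe_refl p'⟩,
    fun a _ q' hq => ⟨q', (h a q').2 hq, ccLe_refl q'⟩⟩

lemma ccLe_self_add_pre (hrl : Disjoint Ar Al) (hrb : Disjoint Ar Abi) {a : A} (ha : a ∈ Ar)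
    (p t : Proc A) : ccLe Ar Al Abi p (.add p (.pre a t)) := by
  refine ccLe_iff.2 ⟨fun b _ p' hp => ⟨p', .addL _ hp, ccLe_refl p'⟩, fun b hb q' hq => ?_⟩
  rcases step_add_iff.1 hq with hq | hq
  · exact ⟨q', hq, ccLe_refl q'⟩
  · obtain ⟨rfl, -⟩ := step_pre_iff.1 hq
    exact absurd hb (Set.disjoint_left.1 (Disjoint.sup_right hrl hrb) ha)

lemma ccLe_add_pre_self (hrl : Disjoint Ar Al) (hlb : Disjoint Al Abi) {a : A} (ha : a ∈ Al)
    (p t : Proc A) : ccLe Ar Al Abi (.add p (.pre a t)) p := by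
  refine ccLe_iff.2 ⟨fun b hb p' hp => ?_, fun b _ q' hq => ⟨q', .addL _ hq, ccLe_refl q'⟩⟩
  rcases step_add_iff.1 hp with hp | hp
  · exact ⟨p', hp, ccLe_refl p'⟩
  · obtain ⟨rfl, -⟩ := step_pre_iff.1 hp
    exact absurd hb (Set.disjoint_left.1 (Disjoint.sup_right hrl.symm hlb) ha)

end Simulation

section Derivation

variable {A : Type} {E : Set (Term A × Term A)}

instance : Std.Refl (DerivLe E) := ⟨DerivLe.refl⟩

instance : IsTrans (Proc A) (DerivLe E) := ⟨fun _ _ _ => DerivLe.trans⟩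

namespace DerivLe

lemma antisymmRel_of_mem_BEqns (hB : BIneqs A ⊆ E) {l r : Term A} (h : (l, r) ∈ BEqns A)
    (σ : ℕ → Proc A) : AntisymmRel (DerivLe E) (l.subst σ) (r.subst σ) :=
  ⟨.ax l r σ (hB (.inl h)), .ax r l σ (hB (.inr ⟨_, h, rfl⟩))⟩

lemma antisymmRel_add_comm (hB : BIneqs A ⊆ E) (p q : Proc A) :
    AntisymmRel (DerivLe E) (.add p q) (.add q p) :=
  antisymmRel_of_mem_BEqns hB (l := .add (.var 0) (.var 1)) (r := .add (.var 1) (.var 0))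
    (by simp [BEqns]) fun | 0 => p | _ => q

lemma antisymmRel_add_assoc (hB : BIneqs A ⊆ E) (p q r : Proc A) :
    AntisymmRel (DerivLe E) (.add (.add p q) r) (.add p (.add q r)) :=
  antisymmRel_of_mem_BEqns hB (l := .add (.add (.var 0) (.var 1)) (.var 2))
    (r := .add (.var 0) (.add (.var 1) (.var 2))) (by simp [BEqns])
    fun | 0 => p | 1 => q | _ => r

lemma antisymmRel_add_self (hB : BIneqs A ⊆ E) (p : Proc A) :
    AntisymmRel (DerivLe E) (.add p p) p :=
  antisymmRel_of_mem_BEqns hB (l := .add (.var 0) (.var 0)) (r := .var 0) (by simp [BEqns])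
    fun _ => p

lemma antisymmRel_add_nil (hB : BIneqs A ⊆ E) (p : Proc A) :
    AntisymmRel (DerivLe E) (.add p .nil) p :=
  antisymmRel_of_mem_BEqns hB (l := .add (.var 0) .nil) (r := .var 0) (by simp [BEqns])
    fun _ => p

lemma antisymmRel_add {p q r s : Proc A} (hpq : AntisymmRel (DerivLe E) p q)
    (hrs : AntisymmRel (DerivLe E) r s) : AntisymmRel (DerivLe E) (.add p r) (.add q s) :=
  ⟨hpq.1.add hrs.1, hpq.2.add hrs.2⟩

lemma antisymmRel_add_pre_of_step (hB : BIneqs A ⊆ E) {a : A} {p p' : Proc A}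
    (h : Step p a p') : AntisymmRel (DerivLe E) (.add (.pre a p') p) p := by
  induction h with
  | pre a p => exact antisymmRel_add_self hB _
  | @addL p a p' q _ ih =>
    exact (antisymmRel_add_assoc hB _ p q).symm.trans (antisymmRel_add ih (.refl _ q))
  | @addR q a q' p _ ih =>
    exact (antisymmRel_add_assoc hB _ p q).symm.trans <|
      (antisymmRel_add (antisymmRel_add_comm hB _ p) .rfl).trans <|
        (antisymmRel_add_assoc hB p _ q).trans (antisymmRel_add .rfl ih)

lemma le_add_of_forall_step (hB : BIneqs A ⊆ E) {p q : Proc A}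
    (h : ∀ b q', Step q b q' → DerivLe E p (.add (.pre b q') p)) : DerivLe E p (.add q p) := by
  induction q with
  | nil => exact (antisymmRel_add_nil hB p).2.trans (antisymmRel_add_comm hB p .nil).1
  | pre b q' => exact h b q' (.pre b q')
  | add q₁ q₂ ih₁ ih₂ =>
    exact (ih₁ fun b q' hq => h b q' (.addL q₂ hq)).trans <|
      ((DerivLe.refl q₁).add (ih₂ fun b q' hq => h b q' (.addR q₁ hq))).trans
        (antisymmRel_add_assoc hB q₁ q₂ p).2

lemma add_le_of_forall_step (hB : BIneqs A ⊆ E) {p q : Proc A}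
    (h : ∀ a p', Step p a p' → DerivLe E (.add (.pre a p') q) q) : DerivLe E (.add p q) q := by
  induction p with
  | nil => exact (antisymmRel_add_comm hB .nil q).1.trans (antisymmRel_add_nil hB q).1
  | pre a p' => exact h a p' (.pre a p')
  | add p₁ p₂ ih₁ ih₂ =>
    exact (antisymmRel_add_assoc hB p₁ p₂ q).1.trans <|
      ((DerivLe.refl p₁).add (ih₂ fun a p' hp => h a p' (.addR p₁ hp))).trans
        (ih₁ fun a p' hp => h a p' (.addL p₂ hp))

end DerivLe

end Derivation

section Axiomatization

variable {A : Type} {Ar Al Abi : Set A}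

lemma bIneqs_subset_axCCPre : BIneqs A ⊆ AxCCPre Ar Al := fun _ h => .inl (.inl h)

lemma derivLe_self_pre_add {a : A} (ha : a ∈ Ar) (p t : Proc A) :
    DerivLe (AxCCPre Ar Al) p (.add (.pre a t) p) :=
  (DerivLe.ax (.var 0) (.add (.var 0) (.pre a (.var 1))) (fun | 0 => p | _ => t)
    (.inl (.inr ⟨a, ha, rfl⟩))).trans
    (DerivLe.antisymmRel_add_comm bIneqs_subset_axCCPre p _).1

lemma derivLe_pre_add_self {a : A} (ha : a ∈ Al) (p t : Proc A) :
    DerivLe (AxCCPre Ar Al) (.add (.pre a t) p) p :=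
  (DerivLe.antisymmRel_add_comm bIneqs_subset_axCCPre _ p).1.trans
    (DerivLe.ax (.add (.var 0) (.pre a (.var 1))) (.var 0) (fun | 0 => p | _ => t)
      (.inr ⟨a, ha, rfl⟩))

lemma step_subst_iff_of_mem_BEqns {l r : Term A} (h : (l, r) ∈ BEqns A) (σ : ℕ → Proc A)
    (a : A) (p' : Proc A) : Step (l.subst σ) a p' ↔ Step (r.subst σ) a p' := by
  simp only [BEqns, Set.mem_insert_iff, Set.mem_singleton_iff, Prod.mk.injEq] at h
  rcases h with ⟨rfl, rfl⟩ | ⟨rfl, rfl⟩ | ⟨rfl, rfl⟩ | ⟨rfl, rfl⟩ <;>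
    simp only [Term.subst, step_add_iff] <;> tauto

theorem ccLe_of_derivLe (hrl : Disjoint Ar Al) (hrb : Disjoint Ar Abi) (hlb : Disjoint Al Abi)
    {p q : Proc A} (h : DerivLe (AxCCPre Ar Al) p q) : ccLe Ar Al Abi p q := by
  induction h with
  | refl p => exact ccLe_refl p
  | trans _ _ ih₁ ih₂ => exact ccLe_trans ih₁ ih₂
  | pre a _ ih => exact ccLe_pre a ih
  | add _ _ ih₁ ih₂ => exact ccLe_add ih₁ ih₂
  | ax l r σ hmem =>
    rcases hmem with ((hB | ⟨⟨r, l⟩, hB, ⟨⟩⟩) | ⟨a, ha, ⟨⟩⟩) | ⟨a, ha, ⟨⟩⟩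
    · exact ccLe_of_step_iff (step_subst_iff_of_mem_BEqns hB σ)
    · exact ccLe_of_step_iff fun a p' => (step_subst_iff_of_mem_BEqns hB σ a p').symm
    · exact ccLe_self_add_pre hrl hrb ha (σ 0) (σ 1)
    · exact ccLe_add_pre_self hrl hlb ha (σ 0) (σ 1)

theorem derivLe_of_ccLe (hcover : Ar ∪ Al ∪ Abi = Set.univ) {p q : Proc A}
    (h : ccLe Ar Al Abi p q) : DerivLe (AxCCPre Ar Al) p q := by
  have hB : BIneqs A ⊆ AxCCPre Ar Al := bIneqs_subset_axCCPre
  have hmem (a : A) : a ∈ Ar ∪ Al ∪ Abi := hcover ▸ Set.mem_univ a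
  obtain ⟨hfwd, hbwd⟩ := ccLe_iff.1 h
  have hle_add : DerivLe (AxCCPre Ar Al) p (.add q p) := by
    refine DerivLe.le_add_of_forall_step hB fun b q' hq => ?_
    by_cases hb : b ∈ Ar
    · exact derivLe_self_pre_add hb p q'
    obtain ⟨p', hp, hpq'⟩ := hbwd b (by simpa [hb, or_assoc] using hmem b) q' hq
    have := sizeOf_lt_of_step hp
    exact (DerivLe.antisymmRel_add_pre_of_step hB hp).2.trans
      ((DerivLe.pre b (derivLe_of_ccLe hcover hpq')).add (.refl p))
  have hadd_le : DerivLe (AxCCPre Ar Al) (.add p q) q := by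
    refine DerivLe.add_le_of_forall_step hB fun a p' hp => ?_
    by_cases ha : a ∈ Al
    · exact derivLe_pre_add_self ha q p'
    obtain ⟨q', hq, hpq'⟩ := hfwd a (by simpa [ha, or_assoc, or_comm] using hmem a) p' hp
    have := sizeOf_lt_of_step hp
    exact ((DerivLe.pre a (derivLe_of_ccLe hcover hpq')).add (.refl q)).trans
      (DerivLe.antisymmRel_add_pre_of_step hB hq).1
  exact hle_add.trans ((DerivLe.antisymmRel_add_comm hB q p).1.trans hadd_le)
termination_by sizeOf p

end Axiomatization

/-- The `(A^r, A^l)`-simulation preorder coincides with derivability from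
`{B1, B2, B3, B4, S^r_p, S^l_p}`. -/
theorem cc_preorder_axiomatization {A : Type} (Ar Al Abi : Set A)
    (hpart : IsPartition Ar Al Abi) (p q : Proc A) :
    ccLe Ar Al Abi p q ↔ DerivLe (AxCCPre Ar Al) p q :=
  ⟨derivLe_of_ccLe hpart.1, ccLe_of_derivLe hpart.2.1 hpart.2.2.1 hpart.2.2.2⟩
end

section
/- If the action set A is infinite, then the conformance precongruence ⊑_CS is the coarsest precongruence contained in the conformance simulation preorder ≲_CS: ⊑_CS is a preorder contained in ≲_CS that is preserved by prefixing and by +, and every preorder contained in ≲_CS that is preserved by prefixing and by + is contained in ⊑_CS. -/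
/-!
`⊑_CS` is preserved by `+` because its extra clause `I(q) ⊆ I(p)` lets `p` answer every initial
move of `q`, so the choice of summand can always be matched.

For coarsestness, let `R ⊆ ≲_CS` be preserved by `+`, let `p R q` and `q --b--> q₁`, and suppose
`b ∉ I(p)`. Since `A` is infinite there is an action `c` that does not occur in `q`. Then
`p + b.c.0 ≲_CS q + b.c.0`, and the move `q + b.c.0 --b--> q₁` can only be matched by
`p + b.c.0 --b--> c.0`, which forces `c ∈ I(q₁)`: a contradiction.
-/
variable {A : Type}

theorem step_pre_iff {a b : A} {p x : Proc A} : Step (.pre a p) b x ↔ b = a ∧ x = p := by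
  constructor
  · rintro ⟨⟩
    exact ⟨rfl, rfl⟩
  · rintro ⟨rfl, rfl⟩
    exact .pre _ _

theorem step_add_iff {p q x : Proc A} {a : A} :
    Step (.add p q) a x ↔ Step p a x ∨ Step q a x := by
  constructor
  · rintro (_ | ⟨_, h⟩ | ⟨_, h⟩)
    · exact .inl h
    · exact .inr h
  · rintro (h | h)
    · exact .addL q h
    · exact .addR p h

theorem initials_pre (a : A) (p : Proc A) : initials (.pre a p) = {a} := by
  ext b
  simp [initials, step_pre_iff]

theorem initials_add (p q : Proc A) : initials (.add p q) = initials p ∪ initials q := by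
  ext a
  simp [initials, step_add_iff, exists_or]

theorem isConfSim_csLe : IsConfSim (csLe (A := A)) := by
  rintro p q ⟨R, hR, hpq⟩
  obtain ⟨hI, hstep⟩ := hR p q hpq
  refine ⟨hI, fun a q' hq ha => ?_⟩
  obtain ⟨p', hp, hR'⟩ := hstep a q' hq ha
  exact ⟨p', hp, R, hR, hR'⟩

/-- Coinduction principle for `≲_CS`. -/
theorem csLe_of_step {p q : Proc A} (hI : initials p ⊆ initials q)
    (hstep : ∀ a q', Step q a q' → a ∈ initials p → ∃ p', Step p a p' ∧ csLe p' q') :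
    csLe p q := by
  refine ⟨fun x y => csLe x y ∨ (x = p ∧ y = q), ?_, .inr ⟨rfl, rfl⟩⟩
  rintro x y (hxy | ⟨rfl, rfl⟩)
  · obtain ⟨hI', hstep'⟩ := isConfSim_csLe x y hxy
    refine ⟨hI', fun a y' hy ha => ?_⟩
    obtain ⟨x', hx, hx'⟩ := hstep' a y' hy ha
    exact ⟨x', hx, .inl hx'⟩
  · refine ⟨hI, fun a y' hy ha => ?_⟩
    obtain ⟨x', hx, hx'⟩ := hstep a y' hy ha
    exact ⟨x', hx, .inl hx'⟩

theorem csLe_refl (p : Proc A) : csLe p p :=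
  ⟨Eq, by rintro p _ rfl; exact ⟨subset_rfl, fun _ p' hp _ => ⟨p', hp, rfl⟩⟩, rfl⟩

theorem csLe_trans {p q r : Proc A} (hpq : csLe p q) (hqr : csLe q r) : csLe p r := by
  refine ⟨fun x z => ∃ y, csLe x y ∧ csLe y z, ?_, q, hpq, hqr⟩
  rintro x z ⟨y, hxy, hyz⟩
  obtain ⟨hIxy, hxy'⟩ := isConfSim_csLe x y hxy
  obtain ⟨hIyz, hyz'⟩ := isConfSim_csLe y z hyz
  refine ⟨hIxy.trans hIyz, fun a z' hz ha => ?_⟩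
  obtain ⟨y', hy, hy'z'⟩ := hyz' a z' hz (hIxy ha)
  obtain ⟨x', hx, hx'y'⟩ := hxy' a y' hy ha
  exact ⟨x', hx, y', hx'y', hy'z'⟩

theorem csLe_pre (a : A) {p q : Proc A} (h : csLe p q) : csLe (.pre a p) (.pre a q) := by
  refine csLe_of_step (initials_pre a p ▸ initials_pre a q ▸ subset_rfl) fun b q' hq _ => ?_
  obtain ⟨rfl, rfl⟩ := step_pre_iff.mp hq
  exact ⟨p, .pre b p, h⟩

theorem csPre_refl (p : Proc A) : csPre p p := ⟨csLe_refl p, subset_rfl⟩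

theorem csPre_trans {p q r : Proc A} (hpq : csPre p q) (hqr : csPre q r) : csPre p r :=
  ⟨csLe_trans hpq.1 hqr.1, hqr.2.trans hpq.2⟩

theorem csPre_pre (a : A) {p q : Proc A} (h : csPre p q) : csPre (.pre a p) (.pre a q) :=
  ⟨csLe_pre a h.1, by rw [initials_pre, initials_pre]⟩

theorem csPre.exists_step {p q q' : Proc A} {a : A} (h : csPre p q) (hq : Step q a q') :
    ∃ p', Step p a p' ∧ csLe p' q' :=
  (isConfSim_csLe p q h.1).2 a q' hq (h.2 ⟨q', hq⟩)

theorem csPre_add {p q r s : Proc A} (hpq : csPre p q) (hrs : csPre r s) :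
    csPre (.add p r) (.add q s) := by
  refine ⟨csLe_of_step ?_ fun a y hy _ => ?_, ?_⟩
  · rw [initials_add, initials_add]
    exact Set.union_subset_union (isConfSim_csLe p q hpq.1).1 (isConfSim_csLe r s hrs.1).1
  · rcases step_add_iff.mp hy with hq | hs
    · obtain ⟨p', hp, hp'⟩ := hpq.exists_step hq
      exact ⟨p', .addL r hp, hp'⟩
    · obtain ⟨r', hr, hr'⟩ := hrs.exists_step hs
      exact ⟨r', .addR p hr, hr'⟩
  · rw [initials_add, initials_add]
    exact Set.union_subset_union hpq.2 hrs.2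

def Proc.actions : Proc A → Set A
  | .nil => ∅
  | .pre a p => insert a p.actions
  | .add p q => p.actions ∪ q.actions

theorem Proc.finite_actions (p : Proc A) : p.actions.Finite := by
  induction p with
  | nil => exact Set.finite_empty
  | pre a p ih => exact ih.insert a
  | add p q hp hq => exact hp.union hq

theorem Step.actions_subset {p p' : Proc A} {a : A} (h : Step p a p') :
    a ∈ p.actions ∧ p'.actions ⊆ p.actions := by
  induction h with
  | pre a p => exact ⟨Set.mem_insert a _, Set.subset_insert a _⟩
  | addL q _ ih => exact ⟨.inl ih.1, ih.2.trans Set.subset_union_left⟩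
  | addR p _ ih => exact ⟨.inr ih.1, ih.2.trans Set.subset_union_right⟩

theorem initials_subset_actions (p : Proc A) : initials p ⊆ p.actions :=
  fun _ ⟨_, h⟩ => h.actions_subset.1

theorem initials_subset_of_forall_csLe_add [Infinite A] {p q : Proc A}
    (h : ∀ r, csLe (.add p r) (.add q r)) : initials q ⊆ initials p := by
  rintro b ⟨q₁, hq₁⟩
  by_contra hbp
  obtain ⟨c, hc⟩ := q.finite_actions.exists_notMem
  have hb : b ∈ initials (.add p (.pre b (.pre c .nil))) := ⟨_, .addR p (.pre b _)⟩
  obtain ⟨hI, hstep⟩ := isConfSim_csLe _ _ (h (.pre b (.pre c .nil)))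
  obtain ⟨p₁, hp₁, hp₁q₁⟩ := hstep b q₁ (.addL _ hq₁) hb
  have hp₁c : p₁ = .pre c .nil := by
    rcases step_add_iff.mp hp₁ with hp | hr
    · exact absurd ⟨p₁, hp⟩ hbp
    · exact (step_pre_iff.mp hr).2
  have hcq₁ : c ∈ initials q₁ := (isConfSim_csLe _ _ hp₁q₁).1 (hp₁c ▸ ⟨.nil, .pre c .nil⟩)
  exact hc (hq₁.actions_subset.2 (initials_subset_actions q₁ hcq₁))

/-- If the action set is infinite, `⊑_CS` is the coarsest precongruence
contained in `≲_CS`: it is a preorder contained in `≲_CS`, preserved by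
prefixing and by `+`, and any preorder contained in `≲_CS` that is preserved by
prefixing and by `+` is contained in `⊑_CS`. -/
theorem csPre_coarsest_precongruence {A : Type} (hA : Infinite A) :
    (∀ p : Proc A, csPre p p) ∧
    (∀ p q r : Proc A, csPre p q → csPre q r → csPre p r) ∧
    (∀ p q : Proc A, csPre p q → csLe p q) ∧
    (∀ (a : A) (p q : Proc A), csPre p q → csPre (.pre a p) (.pre a q)) ∧
    (∀ p q r : Proc A, csPre p q → csPre (.add p r) (.add q r) ∧ csPre (.add r p) (.add r q)) ∧
    (∀ R : Proc A → Proc A → Prop,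
      (∀ p, R p p) →
      (∀ p q r, R p q → R q r → R p r) →
      (∀ p q, R p q → csLe p q) →
      (∀ (a : A) (p q : Proc A), R p q → R (.pre a p) (.pre a q)) →
      (∀ p q r : Proc A, R p q → R (.add p r) (.add q r) ∧ R (.add r p) (.add r q)) →
      ∀ p q : Proc A, R p q → csPre p q) := by
  have := hA
  refine ⟨csPre_refl, fun _ _ _ => csPre_trans, fun _ _ h => h.1, fun a _ _ => csPre_pre a,
    fun _ _ r h => ⟨csPre_add h (csPre_refl r), csPre_add (csPre_refl r) h⟩, ?_⟩
  intro R _ _ hle _ hadd p q hpq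
  exact ⟨hle p q hpq, initials_subset_of_forall_csLe_add fun r => hle _ _ (hadd p q r hpq).1⟩
end

section
/- Let A be an action set with partition {A^r, A^l, A^bi}. For every open BCCSP term x, all actions a, and all terms p_r that are finite sums of terms of the form b.t with b ∈ A^r and all terms p_l that are finite sums of terms of the form b'.t with b' ∈ A^l: if a ∈ A^r, then the equation a.(x + p_r) = a.(x + p_r) + a.(x + p_l) is equationally derivable from B1–B4 together with the schemas (S1): a.(x + b.y) = a.(x + b.y) + a.x (a, b ∈ A^r) and (S2): a.x = a.x + a.(x + b'.y) (a ∈ A^r, b' ∈ A^l); and if a ∈ A^l, then a.(x + p_l) = a.(x + p_l) + a.(x + p_r) is equationally derivable from B1–B4 together with the schemas (S3): a.x = a.x + a.(x + b.y) (a ∈ A^l, b ∈ A^r) and (S4): a.(x + b'.y) = a.(x + b'.y) + a.x (a, b' ∈ A^l). -/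
/-- Schema (S1): `a.(x + b.y) = a.(x + b.y) + a.x` for `a, b ∈ A^r`. -/
def S1Eqns {A : Type} (Ar : Set A) : Set (Term A × Term A) :=
  { e | ∃ a ∈ Ar, ∃ b ∈ Ar,
      e = (.pre a (.add (.var 0) (.pre b (.var 1))),
           .add (.pre a (.add (.var 0) (.pre b (.var 1)))) (.pre a (.var 0))) }

/-- Schema (S2): `a.x = a.x + a.(x + b'.y)` for `a ∈ A^r`, `b' ∈ A^l`. -/
def S2Eqns {A : Type} (Ar Al : Set A) : Set (Term A × Term A) :=
  { e | ∃ a ∈ Ar, ∃ b ∈ Al,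
      e = (.pre a (.var 0),
           .add (.pre a (.var 0)) (.pre a (.add (.var 0) (.pre b (.var 1))))) }

/-- Schema (S3): `a'.x = a'.x + a'.(x + b.y)` for `a' ∈ A^l`, `b ∈ A^r`. -/
def S3Eqns {A : Type} (Ar Al : Set A) : Set (Term A × Term A) :=
  { e | ∃ a ∈ Al, ∃ b ∈ Ar,
      e = (.pre a (.var 0),
           .add (.pre a (.var 0)) (.pre a (.add (.var 0) (.pre b (.var 1))))) }

/-- Schema (S4): `a'.(x + b'.y) = a'.(x + b'.y) + a'.x` for `a', b' ∈ A^l`. -/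
def S4Eqns {A : Type} (Al : Set A) : Set (Term A × Term A) :=
  { e | ∃ a ∈ Al, ∃ b ∈ Al,
      e = (.pre a (.add (.var 0) (.pre b (.var 1))),
           .add (.pre a (.add (.var 0) (.pre b (.var 1)))) (.pre a (.var 0))) }

/-- The axiom set `A_CC^≡`: B1–B4 together with the schemas S1–S4. -/
def ACCEq {A : Type} (Ar Al : Set A) : Set (Term A × Term A) :=
  BEqns A ∪ S1Eqns Ar ∪ S2Eqns Ar Al ∪ S3Eqns Ar Al ∪ S4Eqns Al

/-- `SumOfPre B t` states that `t` is a finite sum of terms of the form `b.t'`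
with `b ∈ B` (the empty sum being `0`). -/
inductive SumOfPre {A : Type} (B : Set A) : Term A → Prop
  | nil : SumOfPre B .nil
  | pre {b : A} (t : Term A) : b ∈ B → SumOfPre B (.pre b t)
  | add {s t : Term A} : SumOfPre B s → SumOfPre B t → SumOfPre B (.add s t)

/-! Read `u = u + v` as "`v` is a summand of `u`"; by B2 this relation is transitive.
Induction on `pᵣ`, peeling off one `A^r`-summand at a time with S1, shows that `a.x` is a
summand of `a.(x + pᵣ)`, and induction on `pₗ` with S2 shows that `a.(x + pₗ)` is a summand
of `a.x`. -/

namespace TDerivEq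

variable {A : Type} {E : Set (Term A × Term A)}

theorem add_assoc (hB : BEqns A ⊆ E) (s t u : Term A) :
    TDerivEq E (.add (.add s t) u) (.add s (.add t u)) := by
  simpa [Term.substT] using
    ax (E := E) (.add (.add (.var 0) (.var 1)) (.var 2)) (.add (.var 0) (.add (.var 1) (.var 2)))
      (fun n => if n = 0 then s else if n = 1 then t else u) (hB (by simp [BEqns]))

theorem add_self (hB : BEqns A ⊆ E) (s : Term A) : TDerivEq E (.add s s) s := by
  simpa [Term.substT] using
    ax (E := E) (.add (.var 0) (.var 0)) (.var 0) (fun _ => s) (hB (by simp [BEqns]))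

theorem add_nil (hB : BEqns A ⊆ E) (s : Term A) : TDerivEq E (.add s .nil) s := by
  simpa [Term.substT] using
    ax (E := E) (.add (.var 0) .nil) (.var 0) (fun _ => s) (hB (by simp [BEqns]))

theorem summand_trans (hB : BEqns A ⊆ E) {u v w : Term A}
    (huv : TDerivEq E u (.add u v)) (hvw : TDerivEq E v (.add v w)) :
    TDerivEq E u (.add u w) :=
  (huv.trans (.add (.refl u) hvw)).trans ((add_assoc hB u v w).symm.trans (.add huv.symm (.refl w)))

theorem pre_add_sum_eq_add_pre (hB : BEqns A ⊆ E) {a : A} {B : Set A}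
    (hS : ∀ b ∈ B, (.pre a (.add (.var 0) (.pre b (.var 1))),
      .add (.pre a (.add (.var 0) (.pre b (.var 1)))) (.pre a (.var 0))) ∈ E)
    {p : Term A} (hp : SumOfPre B p) (x : Term A) :
    TDerivEq E (.pre a (.add x p)) (.add (.pre a (.add x p)) (.pre a x)) := by
  induction hp generalizing x with
  | nil =>
    have hx : TDerivEq E (.pre a (.add x .nil)) (.pre a x) := .pre a (add_nil hB x)
    exact hx.trans ((add_self hB _).symm.trans (.add hx.symm (.refl _)))
  | @pre b t hb =>
    simpa [Term.substT] using
      ax _ _ (fun n => if n = 0 then x else t) (hS b hb)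
  | @add s t _ _ ihs iht =>
    have hassoc : TDerivEq E (.pre a (.add (.add x s) t)) (.pre a (.add x (.add s t))) :=
      .pre a (add_assoc hB x s t)
    have h := summand_trans hB (iht (.add x s)) (ihs x)
    exact hassoc.symm.trans (h.trans (.add hassoc (.refl _)))

theorem pre_eq_add_pre_add_sum (hB : BEqns A ⊆ E) {a : A} {B : Set A}
    (hS : ∀ b ∈ B, (.pre a (.var 0),
      .add (.pre a (.var 0)) (.pre a (.add (.var 0) (.pre b (.var 1))))) ∈ E)
    {p : Term A} (hp : SumOfPre B p) (x : Term A) :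
    TDerivEq E (.pre a x) (.add (.pre a x) (.pre a (.add x p))) := by
  induction hp generalizing x with
  | nil => exact (add_self hB _).symm.trans (.add (.refl _) (.pre a (add_nil hB x).symm))
  | @pre b t hb =>
    simpa [Term.substT] using
      ax _ _ (fun n => if n = 0 then x else t) (hS b hb)
  | @add s t _ _ ihs iht =>
    exact (summand_trans hB (ihs x) (iht (.add x s))).trans
      (.add (.refl _) (.pre a (add_assoc hB x s t)))

end TDerivEq

theorem tDerivEq_pre_add_sum {A : Type} {E : Set (Term A × Term A)} {Ar Al : Set A} {a : A}
    (hB : BEqns A ⊆ E) (hS1 : S1Eqns Ar ⊆ E) (hS2 : S2Eqns Ar Al ⊆ E) (ha : a ∈ Ar)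
    {pr pl : Term A} (hpr : SumOfPre Ar pr) (hpl : SumOfPre Al pl) (x : Term A) :
    TDerivEq E (.pre a (.add x pr)) (.add (.pre a (.add x pr)) (.pre a (.add x pl))) :=
  TDerivEq.summand_trans hB
    (TDerivEq.pre_add_sum_eq_add_pre hB (fun b hb => hS1 ⟨a, ha, b, hb, rfl⟩) hpr x)
    (TDerivEq.pre_eq_add_pre_add_sum hB (fun b hb => hS2 ⟨a, ha, b, hb, rfl⟩) hpl x)

theorem cc_derived_axioms_general {A : Type} (Ar Al : Set A)
    (x : Term A) (a : A) (pr pl : Term A)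
    (hpr : SumOfPre Ar pr) (hpl : SumOfPre Al pl) :
    (a ∈ Ar → TDerivEq (BEqns A ∪ S1Eqns Ar ∪ S2Eqns Ar Al)
        (.pre a (.add x pr))
        (.add (.pre a (.add x pr)) (.pre a (.add x pl)))) ∧
    (a ∈ Al → TDerivEq (BEqns A ∪ S3Eqns Ar Al ∪ S4Eqns Al)
        (.pre a (.add x pl))
        (.add (.pre a (.add x pl)) (.pre a (.add x pr)))) := by
  refine ⟨fun ha => ?_, fun ha => ?_⟩
  · exact tDerivEq_pre_add_sum (fun _ => .inl ∘ .inl) (fun _ => .inl ∘ .inr) (fun _ => .inr)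
      ha hpr hpl x
  · -- S4 and S3 are S1 and S2 for the partition with `A^r` and `A^l` swapped.
    exact tDerivEq_pre_add_sum (Al := Ar) (fun _ => .inl ∘ .inl) (fun _ => .inr)
      (fun _ => .inl ∘ .inr) ha hpl hpr x

/-- The derived equations (DS1) and (DS2): for any open term `x`, any sum `p_r`
of `A^r`-prefixed terms and any sum `p_l` of `A^l`-prefixed terms,
`a.(x + p_r) = a.(x + p_r) + a.(x + p_l)` is derivable from B1–B4, S1, S2 when
`a ∈ A^r`, and `a.(x + p_l) = a.(x + p_l) + a.(x + p_r)` is derivable from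
B1–B4, S3, S4 when `a ∈ A^l`. -/
theorem cc_derived_axioms {A : Type} (Ar Al Abi : Set A)
    (hpart : IsPartition Ar Al Abi)
    (x : Term A) (a : A) (pr pl : Term A)
    (hpr : SumOfPre Ar pr) (hpl : SumOfPre Al pl) :
    (a ∈ Ar → TDerivEq (BEqns A ∪ S1Eqns Ar ∪ S2Eqns Ar Al)
        (.pre a (.add x pr))
        (.add (.pre a (.add x pr)) (.pre a (.add x pl)))) ∧
    (a ∈ Al → TDerivEq (BEqns A ∪ S3Eqns Ar Al ∪ S4Eqns Al)
        (.pre a (.add x pl))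
        (.add (.pre a (.add x pl)) (.pre a (.add x pr)))) :=
  cc_derived_axioms_general Ar Al x a pr pl hpr hpl
end

section
/- Let A be an action set with partition {A^r, A^l, A^bi} where A^bi = ∅. If p and q are closed BCCSP processes with p ≲_CC q, then for every closed process r, every a ∈ A^r and every a' ∈ A^l, the equations a.(q + r) = a.(q + r) + a.(p + r) and a'.(p + r) = a'.(p + r) + a'.(q + r) are equationally derivable from the axiom set A_CC^≡. -/
/-
Write `u ⊒ v` (`DerivAbsorbs`) when `u = u + v` is derivable. Modulo B1–B4 this is a preorder,
and it holds whenever `v` is a summand of `u`. The two equations say `a.(q + r) ⊒ a.(p + r)`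
and `a'.(p + r) ⊒ a'.(q + r)`; both are proved together by well-founded induction on `p`.
For `a ∈ A^r`, insert the summands of `p` into `a.(q + r)`: a covariant summand `b.p'` is
matched by some `b.q'` of `q` with `b.q' ⊒ b.p'` by induction, so it is already absorbed,
while a contravariant one is inserted by (S2). Then erase the summands of `q` from
`a.(p + r + q)`: contravariant ones are absorbed by matching summands of `p`, covariant ones
are erased by (S1). The case `a' ∈ A^l` is dual, with (S3) and (S4).
-/

theorem Step.sizeOf_lt {A : Type} {p : Proc A} {a : A} {p' : Proc A} (h : Step p a p') :
    sizeOf p' < sizeOf p := by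
  induction h <;> simp <;> omega

section Derivability

variable {A : Type} {E : Set (Term A × Term A)}

instance : Trans (DerivEq E) (DerivEq E) (DerivEq E) := ⟨DerivEq.trans⟩

namespace DerivEq

theorem add_comm (hB : BEqns A ⊆ E) (p q : Proc A) : DerivEq E (.add p q) (.add q p) := by
  simpa [Term.subst] using
    ax (E := E) (.add (.var 0) (.var 1)) (.add (.var 1) (.var 0))
      (fun n => if n = 0 then p else q) (hB (by simp [BEqns]))

theorem add_assoc (hB : BEqns A ⊆ E) (p q r : Proc A) :
    DerivEq E (.add (.add p q) r) (.add p (.add q r)) := by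
  simpa [Term.subst] using
    ax (E := E) (.add (.add (.var 0) (.var 1)) (.var 2)) (.add (.var 0) (.add (.var 1) (.var 2)))
      (fun n => if n = 0 then p else if n = 1 then q else r) (hB (by simp [BEqns]))

theorem add_self (hB : BEqns A ⊆ E) (p : Proc A) : DerivEq E (.add p p) p := by
  simpa [Term.subst] using
    ax (E := E) (.add (.var 0) (.var 0)) (.var 0) (fun _ => p) (hB (by simp [BEqns]))

theorem add_nil (hB : BEqns A ⊆ E) (p : Proc A) : DerivEq E (.add p .nil) p := by
  simpa [Term.subst] using
    ax (E := E) (.add (.var 0) .nil) (.var 0) (fun _ => p) (hB (by simp [BEqns]))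

theorem add_right_comm (hB : BEqns A ⊆ E) (p q r : Proc A) :
    DerivEq E (.add (.add p q) r) (.add (.add p r) q) :=
  calc DerivEq E (.add (.add p q) r) (.add p (.add q r)) := add_assoc hB p q r
    DerivEq E _ (.add p (.add r q)) := .add (.refl p) (add_comm hB q r)
    DerivEq E _ (.add (.add p r) q) := (add_assoc hB p r q).symm

end DerivEq

def DerivAbsorbs (E : Set (Term A × Term A)) (u v : Proc A) : Prop :=
  DerivEq E u (.add u v)

namespace DerivAbsorbs

theorem of_derivEq (hB : BEqns A ⊆ E) {u v : Proc A} (h : DerivEq E u v) : DerivAbsorbs E u v :=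
  (DerivEq.add_self hB u).symm.trans (.add (.refl u) h)

theorem congr {u u' v v' : Proc A} (hu : DerivEq E u u') (hv : DerivEq E v v')
    (h : DerivAbsorbs E u v) : DerivAbsorbs E u' v' :=
  hu.symm.trans (h.trans (.add hu hv))

theorem trans (hB : BEqns A ⊆ E) {u v w : Proc A} (huv : DerivAbsorbs E u v)
    (hvw : DerivAbsorbs E v w) : DerivAbsorbs E u w :=
  calc DerivEq E u (.add u v) := huv
    DerivEq E _ (.add u (.add v w)) := .add (.refl u) hvw
    DerivEq E _ (.add (.add u v) w) := (DerivEq.add_assoc hB u v w).symm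
    DerivEq E _ (.add u w) := .add huv.symm (.refl w)

theorem add_left (hB : BEqns A ⊆ E) (u v : Proc A) : DerivAbsorbs E (.add u v) u :=
  calc DerivEq E (.add u v) (.add (.add u u) v) := .add (DerivEq.add_self hB u).symm (.refl v)
    DerivEq E _ (.add (.add u v) u) := DerivEq.add_right_comm hB u u v

theorem add_right (hB : BEqns A ⊆ E) (u v : Proc A) : DerivAbsorbs E (.add u v) v :=
  (add_left hB v u).congr (DerivEq.add_comm hB v u) (.refl v)

theorem of_step (hB : BEqns A ⊆ E) {p p' : Proc A} {a : A} (h : Step p a p') :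
    DerivAbsorbs E p (.pre a p') := by
  induction h with
  | pre a p => exact of_derivEq hB (.refl _)
  | addL q _ ih => exact (add_left hB _ q).trans hB ih
  | addR p _ ih => exact (add_right hB p _).trans hB ih

end DerivAbsorbs

theorem rel_pre_pre_add_of_steps (hB : BEqns A ⊆ E) {R : Proc A → Proc A → Prop}
    (hR : ∀ {u v}, DerivEq E u v → R u v) (hRtrans : ∀ {u v w}, R u v → R v w → R u w)
    {a : A} {P : A → Prop}
    (hP : ∀ b, P b → ∀ x y, R (.pre a x) (.pre a (.add x (.pre b y))))
    (p₀ : Proc A) :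
    ∀ x, (∀ b p', Step p₀ b p' → ¬ P b → DerivAbsorbs E x (.pre b p')) →
      R (.pre a x) (.pre a (.add x p₀)) := by
  induction p₀ with
  | nil => exact fun x _ => hR (.pre a (DerivEq.add_nil hB x).symm)
  | pre b y =>
    intro x hx
    by_cases hb : P b
    · exact hP b hb x y
    · exact hR (.pre a (hx b y (.pre b y) hb))
  | add p₁ p₂ ih₁ ih₂ =>
    intro x hx
    have h₁ := ih₁ x fun b p' h => hx b p' (.addL p₂ h)
    have h₂ := ih₂ (.add x p₁) fun b p' h hb =>
      (DerivAbsorbs.add_left hB x p₁).trans hB (hx b p' (.addR p₁ h) hb)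
    exact hRtrans (hRtrans h₁ h₂) (hR (.pre a (DerivEq.add_assoc hB x p₁ p₂)))

theorem DerivAbsorbs.pre_add_of_steps (hB : BEqns A ⊆ E) {a : A} {P : A → Prop}
    (hP : ∀ b, P b → ∀ x y, DerivAbsorbs E (.pre a x) (.pre a (.add x (.pre b y))))
    {p₀ x : Proc A} (hx : ∀ b p', Step p₀ b p' → ¬ P b → DerivAbsorbs E x (.pre b p')) :
    DerivAbsorbs E (.pre a x) (.pre a (.add x p₀)) :=
  rel_pre_pre_add_of_steps hB (DerivAbsorbs.of_derivEq hB) (DerivAbsorbs.trans hB) hP p₀ x hx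

theorem DerivAbsorbs.pre_of_steps (hB : BEqns A ⊆ E) {a : A} {P : A → Prop}
    (hP : ∀ b, P b → ∀ x y, DerivAbsorbs E (.pre a (.add x (.pre b y))) (.pre a x))
    {p₀ x : Proc A} (hx : ∀ b p', Step p₀ b p' → ¬ P b → DerivAbsorbs E x (.pre b p')) :
    DerivAbsorbs E (.pre a (.add x p₀)) (.pre a x) :=
  rel_pre_pre_add_of_steps (R := flip (DerivAbsorbs E)) hB
    (fun h => DerivAbsorbs.of_derivEq hB h.symm) (fun h₁ h₂ => DerivAbsorbs.trans hB h₂ h₁)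
    hP p₀ x hx

end Derivability

section Schemas

variable {A : Type} {Ar Al : Set A}

theorem BEqns_subset_ACCEq : BEqns A ⊆ ACCEq Ar Al :=
  fun _ h => .inl (.inl (.inl (.inl h)))

theorem derivAbsorbs_S1 {a b : A} (ha : a ∈ Ar) (hb : b ∈ Ar) (x y : Proc A) :
    DerivAbsorbs (ACCEq Ar Al) (.pre a (.add x (.pre b y))) (.pre a x) := by
  simpa [DerivAbsorbs, Term.subst] using DerivEq.ax _ _ (fun n => if n = 0 then x else y)
    (show _ ∈ ACCEq Ar Al from .inl (.inl (.inl (.inr ⟨a, ha, b, hb, rfl⟩))))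

theorem derivAbsorbs_S2 {a b : A} (ha : a ∈ Ar) (hb : b ∈ Al) (x y : Proc A) :
    DerivAbsorbs (ACCEq Ar Al) (.pre a x) (.pre a (.add x (.pre b y))) := by
  simpa [DerivAbsorbs, Term.subst] using DerivEq.ax _ _ (fun n => if n = 0 then x else y)
    (show _ ∈ ACCEq Ar Al from .inl (.inl (.inr ⟨a, ha, b, hb, rfl⟩)))

theorem derivAbsorbs_S3 {a b : A} (ha : a ∈ Al) (hb : b ∈ Ar) (x y : Proc A) :
    DerivAbsorbs (ACCEq Ar Al) (.pre a x) (.pre a (.add x (.pre b y))) := by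
  simpa [DerivAbsorbs, Term.subst] using DerivEq.ax _ _ (fun n => if n = 0 then x else y)
    (show _ ∈ ACCEq Ar Al from .inl (.inr ⟨a, ha, b, hb, rfl⟩))

theorem derivAbsorbs_S4 {a b : A} (ha : a ∈ Al) (hb : b ∈ Al) (x y : Proc A) :
    DerivAbsorbs (ACCEq Ar Al) (.pre a (.add x (.pre b y))) (.pre a x) := by
  simpa [DerivAbsorbs, Term.subst] using DerivEq.ax _ _ (fun n => if n = 0 then x else y)
    (show _ ∈ ACCEq Ar Al from .inr ⟨a, ha, b, hb, rfl⟩)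

end Schemas

theorem derivAbsorbs_of_isCCSim {A : Type} {Ar Al : Set A} (htot : ∀ b, b ∈ Ar ∨ b ∈ Al)
    {S : Proc A → Proc A → Prop} (hS : IsCCSim Ar Al ∅ S) (p q : Proc A) (hpq : S p q)
    (r : Proc A) :
    (∀ a ∈ Ar, DerivAbsorbs (ACCEq Ar Al) (.pre a (.add q r)) (.pre a (.add p r))) ∧
    (∀ a ∈ Al, DerivAbsorbs (ACCEq Ar Al) (.pre a (.add p r)) (.pre a (.add q r))) := by
  have hB : BEqns A ⊆ ACCEq Ar Al := BEqns_subset_ACCEq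
  have hnil (b : A) (u : Proc A) : DerivEq (ACCEq Ar Al) (.pre b (.add u .nil)) (.pre b u) :=
    .pre b (DerivEq.add_nil hB u)
  have hcov : ∀ b p', Step p b p' → b ∈ Ar → DerivAbsorbs (ACCEq Ar Al) q (.pre b p') := by
    intro b p' hstep hb
    obtain ⟨q', hq', hS'⟩ := (hS p q hpq).1 b (.inl hb) p' hstep
    have ih := (derivAbsorbs_of_isCCSim htot hS p' q' hS' .nil).1 b hb
    exact (DerivAbsorbs.of_step hB hq').trans hB (ih.congr (hnil b q') (hnil b p'))
  have hcontra : ∀ c q', Step q c q' → c ∈ Al →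
      DerivAbsorbs (ACCEq Ar Al) p (.pre c q') := by
    intro c q' hstep hc
    obtain ⟨p', hp', hS'⟩ := (hS p q hpq).2 c (.inl hc) q' hstep
    have ih := (derivAbsorbs_of_isCCSim htot hS p' q' hS' .nil).2 c hc
    exact (DerivAbsorbs.of_step hB hp').trans hB (ih.congr (hnil c p') (hnil c q'))
  have hqr : ∀ b p', Step p b p' → b ∉ Al →
      DerivAbsorbs (ACCEq Ar Al) (.add q r) (.pre b p') :=
    fun b p' h hb =>
      (DerivAbsorbs.add_left hB q r).trans hB (hcov b p' h ((htot b).resolve_right hb))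
  have hpr : ∀ c q', Step q c q' → c ∉ Ar →
      DerivAbsorbs (ACCEq Ar Al) (.add p r) (.pre c q') :=
    fun c q' h hc =>
      (DerivAbsorbs.add_left hB p r).trans hB (hcontra c q' h ((htot c).resolve_left hc))
  have hswap : DerivEq (ACCEq Ar Al) (.add (.add q r) p) (.add (.add p r) q) :=
    calc DerivEq _ (.add (.add q r) p) (.add (.add q p) r) := DerivEq.add_right_comm hB q r p
      DerivEq _ _ (.add (.add p q) r) := .add (DerivEq.add_comm hB q p) (.refl r)
      DerivEq _ _ (.add (.add p r) q) := DerivEq.add_right_comm hB p q r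
  constructor
  · intro a ha
    have hins := DerivAbsorbs.pre_add_of_steps hB (fun b hb => derivAbsorbs_S2 ha hb) hqr
    have hers := DerivAbsorbs.pre_of_steps hB (fun b hb => derivAbsorbs_S1 ha hb) hpr
    exact hins.trans hB (hers.congr (.pre a hswap.symm) (.refl _))
  · intro a ha
    have hins := DerivAbsorbs.pre_add_of_steps hB (fun b hb => derivAbsorbs_S3 ha hb) hpr
    have hers := DerivAbsorbs.pre_of_steps hB (fun b hb => derivAbsorbs_S4 ha hb) hqr
    exact hins.trans hB (hers.congr (.pre a hswap) (.refl _))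
termination_by p
decreasing_by all_goals exact Step.sizeOf_lt ‹_›

/-- If `A^bi = ∅` and `p ≲_CC q`, then for every process `r`, every `a ∈ A^r`
and every `a' ∈ A^l`, the equations `a.(q + r) = a.(q + r) + a.(p + r)` and
`a'.(p + r) = a'.(p + r) + a'.(q + r)` are derivable from `A_CC^≡`. -/
theorem cc_le_derivable {A : Type} (Ar Al Abi : Set A)
    (hpart : IsPartition Ar Al Abi) (hbi : Abi = ∅)
    (p q : Proc A) (hpq : ccLe Ar Al Abi p q) :
    ∀ r : Proc A, ∀ a ∈ Ar, ∀ a' ∈ Al,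
      DerivEq (ACCEq Ar Al) (.pre a (.add q r))
        (.add (.pre a (.add q r)) (.pre a (.add p r))) ∧
      DerivEq (ACCEq Ar Al) (.pre a' (.add p r))
        (.add (.pre a' (.add p r)) (.pre a' (.add q r))) := by
  subst hbi
  have htot (b : A) : b ∈ Ar ∨ b ∈ Al := by simpa using Set.eq_univ_iff_forall.1 hpart.1 b
  obtain ⟨S, hS, hSpq⟩ := hpq
  intro r a ha a' ha'
  have h := derivAbsorbs_of_isCCSim htot hS p q hSpq r
  exact ⟨h.1 a ha, h.2 a' ha'⟩
end
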